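/- Let $\mathbb{U}$ be the unit disk and let $r_0 \in (0,1)$, $\Theta \in [0, \pi)$. Consider a generalized cycle $C$ of Euclidean radius $r$ meeting the circle $C_0 = C(0, r_0)$ at angle $\Theta$, so its center is at distance $d = \sqrt{r_0^2 + r^2 + 2 r_0 r \cos\Theta}$ from the origin. Then: (i) $C$ is a hyperbolic circle iff $d < 1 - r$; (ii) $C$ is a horocycle (tangent internally to $\partial\mathbb{U}$) iff $d = 1 - r$; (iii) $C$ is a hypercycle (meets $\partial\mathbb{U}$ in two points) iff $1 - r < d < 1 + r$. Moreover, as $r$ ranges over $(0, \infty)$ with $d = d(r)$ as above, the geodesic curvature $g(r)$ (defined piecewise as $\coth$ of hyperbolic radius, $1$, or $-\cos$ of the boundary intersection angle) is a continuous strictly decreasing function of $r$. -/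

import Mathlib

/-!
The center of the cycle lies at distance `d` with `d² = r₀² + r² + 2 r₀ r cos Θ` (law of cosines),
so `|r - r₀| ≤ d ≤ r + r₀`: the cycle neither surrounds the unit disk nor misses it on the outside,
and its position relative to `∂𝕌` is decided by the sign of `d - (1 - r)`. A point of
`sphere c r ∩ sphere 0 1` is a unit vector on the radical line `⟪c, z⟫ = (1 + ‖c‖² - r²) / 2`; its
coordinate along `J c` then solves `s² = Δ` with
`4Δ = (‖c‖ + r - 1)(1 + r - ‖c‖)(1 + ‖c‖ - r)(1 + ‖c‖ + r)`, so the number of intersection points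
is governed by the sign of `Δ`.

In all three cases the curvature equals `(1 + r² - d²) / (2r)` (for hyperbolic circles because
`coth (artanh a - artanh b) = (1 - ab) / (a - b)`), which after substituting `d²` is
`(1 - r₀²) / (2r) - r₀ cos Θ`.
-/

open Real Metric

noncomputable def artanh (x : ℝ) : ℝ := (1 / 2) * Real.log ((1 + x) / (1 - x))

theorem Real.ncard_setOf_sq_eq (Δ : ℝ) :
    {s : ℝ | s ^ 2 = Δ}.ncard = if Δ = 0 then 1 else if 0 < Δ then 2 else 0 := by
  rcases lt_trichotomy Δ 0 with hΔ | rfl | hΔ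
  · have : {s : ℝ | s ^ 2 = Δ} = ∅ :=
      Set.eq_empty_of_forall_notMem fun s hs => (sq_nonneg s).not_gt (hs ▸ hΔ)
    simp [this, hΔ.ne, hΔ.not_gt]
  · simp
  · have hroots : {s : ℝ | s ^ 2 = Δ} = {√Δ, -√Δ} := by
      ext s
      rw [Set.mem_ofPred_eq, ← sq_sqrt hΔ.le, sq_eq_sq_iff_eq_or_eq_neg, sq_sqrt hΔ.le]
      rfl
    have hne : √Δ ≠ -√Δ := by linarith [sqrt_pos.2 hΔ]
    simp [hroots, Set.ncard_pair hne, hΔ.ne', hΔ]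

theorem closedBall_subset_ball_zero_iff {E : Type*} [NormedAddCommGroup E] [NormedSpace ℝ E]
    {c : E} (hc : c ≠ 0) {r R : ℝ} (hr : 0 ≤ r) : closedBall c r ⊆ ball 0 R ↔ ‖c‖ + r < R := by
  refine ⟨fun h => ?_, fun h => closedBall_subset_ball' (by rwa [dist_zero_right, add_comm])⟩
  have hc' : 0 < ‖c‖ := norm_pos_iff.2 hc
  have hfar : c + (r / ‖c‖) • c ∈ closedBall c r := by
    rw [mem_closedBall, dist_eq_norm, add_sub_cancel_left, norm_smul, norm_div, norm_norm,
      Real.norm_of_nonneg hr, div_mul_cancel₀ _ hc'.ne']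
  have hnorm : ‖c + (r / ‖c‖) • c‖ = ‖c‖ + r := by
    rw [show c + (r / ‖c‖) • c = (1 + r / ‖c‖) • c by module, norm_smul,
      Real.norm_of_nonneg (by positivity), add_mul, one_mul, div_mul_cancel₀ _ hc'.ne']
  simpa [hnorm] using h hfar

section PlaneCircles

open Module
open scoped RealInnerProductSpace

variable {V : Type*} [NormedAddCommGroup V] [InnerProductSpace ℝ V]

theorem mem_sphere_inter_unitSphere_iff {c z : V} {r : ℝ} (hr : 0 ≤ r) :
    z ∈ sphere c r ∩ sphere 0 1 ↔ ‖z‖ = 1 ∧ ⟪c, z⟫ = (1 + ‖c‖ ^ 2 - r ^ 2) / 2 := by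
  rw [Set.mem_inter_iff, mem_sphere_iff_norm, mem_sphere_zero_iff_norm,
    ← sq_eq_sq₀ (norm_nonneg _) hr, norm_sub_sq_real, real_inner_comm]
  constructor
  · rintro ⟨h, hz⟩
    exact ⟨hz, by rw [hz] at h; linarith⟩
  · rintro ⟨hz, h⟩
    exact ⟨by rw [hz, h]; ring, hz⟩

variable [Fact (finrank ℝ V = 2)] (o : Orientation ℝ V (Fin 2))

local notation "ω" => o.areaForm
local notation "J" => o.rightAngleRotation

theorem Orientation.sq_norm_smul_eq_inner_smul_add_areaForm_smul (a x : V) :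
    ‖a‖ ^ 2 • x = ⟪a, x⟫ • a + ω a x • J a := by
  refine ext_inner_right ℝ fun y => ?_
  simp only [inner_smul_left, inner_add_left, o.inner_rightAngleRotation_left, RCLike.conj_to_real]
  rw [← o.inner_mul_inner_add_areaForm_mul_areaForm a x y]

theorem Orientation.inner_areaForm_smul_add_smul_rightAngleRotation {c : V} (hc : c ≠ 0)
    (k s : ℝ) :
    ⟪c, (‖c‖ ^ 2)⁻¹ • (k • c + s • J c)⟫ = k ∧ ω c ((‖c‖ ^ 2)⁻¹ • (k • c + s • J c)) = s := by
  have hc2 : ‖c‖ ^ 2 ≠ 0 := by positivity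
  simp only [inner_smul_right, inner_add_right, real_inner_self_eq_norm_sq,
    o.inner_rightAngleRotation_right, o.areaForm_apply_self, map_smul, map_add,
    o.areaForm_rightAngleRotation_right, smul_eq_mul, mul_zero, neg_zero, add_zero, zero_add]
  exact ⟨by field_simp, by field_simp⟩

theorem Orientation.setOf_norm_eq_one_inner_eq {c : V} (hc : c ≠ 0) (k : ℝ) :
    {z : V | ‖z‖ = 1 ∧ ⟪c, z⟫ = k} =
      (fun s : ℝ => (‖c‖ ^ 2)⁻¹ • (k • c + s • J c)) '' {s | s ^ 2 = ‖c‖ ^ 2 - k ^ 2} := by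
  have hc2 : ‖c‖ ^ 2 ≠ 0 := by positivity
  ext z
  constructor
  · rintro ⟨hz, hk⟩
    refine ⟨ω c z, ?_, ?_⟩
    · have := o.inner_sq_add_areaForm_sq c z
      rw [hz, hk] at this
      simp only [Set.mem_ofPred_eq]
      linarith
    · rw [← hk]
      dsimp only
      rw [← o.sq_norm_smul_eq_inner_smul_add_areaForm_smul, smul_smul, inv_mul_cancel₀ hc2,
        one_smul]
  · rintro ⟨s, hs, rfl⟩
    obtain ⟨hk, hω⟩ := o.inner_areaForm_smul_add_smul_rightAngleRotation hc k s
    refine ⟨?_, hk⟩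
    have := o.inner_sq_add_areaForm_sq c ((‖c‖ ^ 2)⁻¹ • (k • c + s • J c))
    rw [hk, hω, show s ^ 2 = ‖c‖ ^ 2 - k ^ 2 from hs] at this
    have hsq : ‖(‖c‖ ^ 2)⁻¹ • (k • c + s • J c)‖ ^ 2 = 1 ^ 2 := by
      apply mul_left_cancel₀ hc2
      linarith
    exact (sq_eq_sq₀ (norm_nonneg _) zero_le_one).1 hsq

theorem ncard_sphere_inter_unitSphere {c : V} (hc : c ≠ 0) {r : ℝ} (hr : 0 ≤ r) :
    (sphere c r ∩ sphere 0 1).ncard = {s : ℝ | s ^ 2 =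
      (‖c‖ + r - 1) * (1 + r - ‖c‖) * (1 + ‖c‖ - r) * (1 + ‖c‖ + r) / 4}.ncard := by
  have : FiniteDimensional ℝ V := .of_fact_finrank_eq_two
  let o : Orientation ℝ V (Fin 2) := (finBasisOfFinrankEq ℝ V Fact.out).orientation
  have hset : sphere c r ∩ sphere 0 1 = {z : V | ‖z‖ = 1 ∧ ⟪c, z⟫ = (1 + ‖c‖ ^ 2 - r ^ 2) / 2} :=
    Set.ext fun z => mem_sphere_inter_unitSphere_iff hr
  have hdisc : ‖c‖ ^ 2 - ((1 + ‖c‖ ^ 2 - r ^ 2) / 2) ^ 2 =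
      (‖c‖ + r - 1) * (1 + r - ‖c‖) * (1 + ‖c‖ - r) * (1 + ‖c‖ + r) / 4 := by ring
  rw [hset, o.setOf_norm_eq_one_inner_eq hc, hdisc, Set.ncard_image_of_injective]
  exact Function.LeftInverse.injective fun s =>
    (o.inner_areaForm_smul_add_smul_rightAngleRotation hc _ s).2

theorem exists_sphere_inter_unitSphere_eq_singleton_iff {c : V} (hc : c ≠ 0) {r : ℝ}
    (hr : 0 ≤ r) (hlo : r - 1 < ‖c‖) (hhi : ‖c‖ < 1 + r) :
    (∃ x, sphere c r ∩ sphere 0 1 = {x}) ↔ ‖c‖ = 1 - r := by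
  rw [← Set.ncard_eq_one, ncard_sphere_inter_unitSphere hc hr, Real.ncard_setOf_sq_eq]
  have h₁ : 1 + r - ‖c‖ ≠ 0 := by linarith
  have h₂ : 1 + ‖c‖ - r ≠ 0 := by linarith
  have h₃ : 1 + ‖c‖ + r ≠ 0 := by linarith [norm_nonneg c]
  have key : (‖c‖ + r - 1) * (1 + r - ‖c‖) * (1 + ‖c‖ - r) * (1 + ‖c‖ + r) / 4 = 0 ↔
      ‖c‖ = 1 - r := by
    simp only [div_eq_zero_iff, mul_eq_zero, h₁, h₂, h₃, or_false, OfNat.ofNat_ne_zero]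
    constructor <;> intro h <;> linarith
  split_ifs with h
  · simpa using key.1 h
  · simpa using mt key.2 h
  · simpa using mt key.2 h

theorem exists_ne_sphere_inter_unitSphere_eq_pair_iff {c : V} (hc : c ≠ 0) {r : ℝ}
    (hr : 0 ≤ r) (hlo : r - 1 < ‖c‖) :
    (∃ x y, x ≠ y ∧ sphere c r ∩ sphere 0 1 = {x, y}) ↔ 1 - r < ‖c‖ ∧ ‖c‖ < 1 + r := by
  rw [← Set.ncard_eq_two, ncard_sphere_inter_unitSphere hc hr, Real.ncard_setOf_sq_eq]
  have hpos : 0 < (1 + ‖c‖ - r) * (1 + ‖c‖ + r) := by nlinarith [norm_nonneg c]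
  have key : 0 < (‖c‖ + r - 1) * (1 + r - ‖c‖) * (1 + ‖c‖ - r) * (1 + ‖c‖ + r) / 4 ↔
      1 - r < ‖c‖ ∧ ‖c‖ < 1 + r := by
    rw [div_pos_iff_of_pos_right four_pos, mul_assoc, mul_pos_iff_of_pos_right hpos, mul_pos_iff]
    constructor
    · rintro (⟨h₁, h₂⟩ | ⟨h₁, h₂⟩) <;> constructor <;> linarith
    · rintro ⟨h₁, h₂⟩
      exact Or.inl ⟨by linarith, by linarith⟩
  split_ifs with h h'
  · simpa [h] using key.not.1
  · simpa using key.1 h'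
  · simpa using key.not.1 h'

end PlaneCircles

theorem artanh_eq_real_artanh {x : ℝ} (hx : x ∈ Set.Icc (-1) 1) :
    _root_.artanh x = Real.artanh x :=
  (Real.artanh_eq_half_log hx).symm

theorem cosh_div_sinh_artanh_sub {a b : ℝ} (ha : a ∈ Set.Ioo (-1) 1) (hb : b ∈ Set.Ioo (-1) 1) :
    cosh (_root_.artanh a - _root_.artanh b) / sinh (_root_.artanh a - _root_.artanh b) =
      (1 - a * b) / (a - b) := by
  have hpa : 0 < √(1 - a ^ 2) := sqrt_pos.2 (by nlinarith [ha.1, ha.2])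
  have hpb : 0 < √(1 - b ^ 2) := sqrt_pos.2 (by nlinarith [hb.1, hb.2])
  rw [artanh_eq_real_artanh (Set.Ioo_subset_Icc_self ha),
    artanh_eq_real_artanh (Set.Ioo_subset_Icc_self hb), cosh_sub, sinh_sub,
    cosh_artanh ha, cosh_artanh hb, sinh_artanh ha, sinh_artanh hb]
  have hnum : 1 / √(1 - a ^ 2) * (1 / √(1 - b ^ 2)) - a / √(1 - a ^ 2) * (b / √(1 - b ^ 2)) =
      (1 - a * b) / (√(1 - a ^ 2) * √(1 - b ^ 2)) := by field_simp
  have hden : a / √(1 - a ^ 2) * (1 / √(1 - b ^ 2)) - 1 / √(1 - a ^ 2) * (b / √(1 - b ^ 2)) =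
      (a - b) / (√(1 - a ^ 2) * √(1 - b ^ 2)) := by field_simp
  rw [hnum, hden, div_div_div_cancel_right₀ (mul_pos hpa hpb).ne']

/-- The geodesic curvature of the cycle of Euclidean radius `r` whose center lies at distance `d`
from the origin. Its diameter through the origin runs from `d - r` to `d + r`, and the hyperbolic
distance from `0` to `x` is `2 artanh x`, so `artanh (d + r) - artanh (d - r)` is its hyperbolic
radius. -/
noncomputable def cycleCurvature (d r : ℝ) : ℝ :=
  if d + r < 1 then
    cosh (_root_.artanh (d + r) - _root_.artanh (d - r)) /
      sinh (_root_.artanh (d + r) - _root_.artanh (d - r))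
  else if d + r = 1 then 1
  else (1 + r ^ 2 - d ^ 2) / (2 * r)

theorem cycleCurvature_eq {d r : ℝ} (hr : 0 < r) (hd : r - 1 < d) :
    cycleCurvature d r = (1 + r ^ 2 - d ^ 2) / (2 * r) := by
  unfold cycleCurvature
  split_ifs with hin htan
  · rw [cosh_div_sinh_artanh_sub ⟨by linarith, hin⟩ ⟨by linarith, by linarith⟩]
    congr 1 <;> ring
  · rw [show d = 1 - r by linarith]
    field_simp
    ring
  · rfl

/-- Distance from the origin to the center of a circle of radius `r` meeting `C(0, r₀)` at an
angle of cosine `κ` (law of cosines). -/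
noncomputable def centerDist (r₀ κ r : ℝ) : ℝ := √(r₀ ^ 2 + r ^ 2 + 2 * r₀ * r * κ)

section CenterDist

variable {r₀ κ r : ℝ}

theorem sq_centerDist (hr₀ : 0 ≤ r₀) (hr : 0 ≤ r) (hκ : -1 ≤ κ) :
    centerDist r₀ κ r ^ 2 = r₀ ^ 2 + r ^ 2 + 2 * r₀ * r * κ :=
  sq_sqrt (by nlinarith [mul_nonneg (mul_nonneg hr₀ hr) (neg_le_iff_add_nonneg.1 hκ),
      sq_nonneg (r - r₀)])

theorem centerDist_pos (hr₀ : 0 < r₀) (hr : 0 < r) (hκ : -1 < κ) : 0 < centerDist r₀ κ r :=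
  sqrt_pos.2 (by nlinarith [mul_pos (mul_pos hr₀ hr) (neg_lt_iff_pos_add.1 hκ), sq_nonneg (r - r₀)])

theorem abs_sub_le_centerDist (hr₀ : 0 ≤ r₀) (hr : 0 ≤ r) (hκ : -1 ≤ κ) :
    |r - r₀| ≤ centerDist r₀ κ r :=
  abs_le_sqrt (by nlinarith [mul_nonneg (mul_nonneg hr₀ hr) (neg_le_iff_add_nonneg.1 hκ)])

theorem centerDist_le_add (hr₀ : 0 ≤ r₀) (hr : 0 ≤ r) (hκ : κ ≤ 1) :
    centerDist r₀ κ r ≤ r + r₀ :=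
  (sqrt_le_left (by positivity)).2 (by nlinarith [mul_nonneg (mul_nonneg hr₀ hr) (sub_nonneg.2 hκ)])

end CenterDist

/-- Classification of generalized cycles meeting a fixed circle at a fixed angle in the
Poincaré disk, and strict monotonicity plus continuity of the geodesic curvature. -/
theorem stmt_11 (r₀ Θ : ℝ) (hr₀ : 0 < r₀) (hr₀1 : r₀ < 1) (hΘ : Θ ∈ Set.Ico 0 π) :
    let d : ℝ → ℝ := fun r => Real.sqrt (r₀ ^ 2 + r ^ 2 + 2 * r₀ * r * Real.cos Θ)
    let g : ℝ → ℝ := fun r =>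
      if d r + r < 1 then
        Real.cosh (_root_.artanh (d r + r) - _root_.artanh (d r - r)) /
          Real.sinh (_root_.artanh (d r + r) - _root_.artanh (d r - r))
      else if d r + r = 1 then 1
      else (1 + r ^ 2 - d r ^ 2) / (2 * r)
    (∀ r : ℝ, 0 < r → ∀ c : EuclideanSpace ℝ (Fin 2), ‖c‖ = d r →
      ((closedBall c r ⊆ ball (0 : EuclideanSpace ℝ (Fin 2)) 1 ↔ d r < 1 - r) ∧
        ((∃ x, sphere c r ∩ sphere (0 : EuclideanSpace ℝ (Fin 2)) 1 = {x}) ↔ d r = 1 - r) ∧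
        ((∃ x y, x ≠ y ∧ sphere c r ∩ sphere (0 : EuclideanSpace ℝ (Fin 2)) 1 = {x, y}) ↔
          1 - r < d r ∧ d r < 1 + r))) ∧
      ContinuousOn g (Set.Ioi 0) ∧ StrictAntiOn g (Set.Ioi 0) := by
  intro d g
  have : Fact (Module.finrank ℝ (EuclideanSpace ℝ (Fin 2)) = 2) := ⟨finrank_euclideanSpace_fin⟩
  have hκ₀ : -1 < cos Θ := by simpa using cos_lt_cos_of_nonneg_of_le_pi hΘ.1 le_rfl hΘ.2
  have hd_lo (r : ℝ) (hr : 0 < r) : r - 1 < d r :=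
    calc r - 1 < r - r₀ := by linarith
      _ ≤ |r - r₀| := le_abs_self _
      _ ≤ d r := abs_sub_le_centerDist hr₀.le hr.le hκ₀.le
  have hd_hi (r : ℝ) (hr : 0 < r) : d r < 1 + r :=
    (centerDist_le_add hr₀.le hr.le (cos_le_one Θ)).trans_lt (by linarith)
  have hg : Set.EqOn (fun r => (1 - r₀ ^ 2) / (2 * r) - r₀ * cos Θ) g (Set.Ioi 0) := by
    intro r (hr : 0 < r)
    change _ = cycleCurvature (d r) r
    rw [cycleCurvature_eq hr (hd_lo r hr), show d r = centerDist r₀ (cos Θ) r from rfl,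
      sq_centerDist hr₀.le hr.le hκ₀.le]
    field_simp
    ring
  have hanti : StrictAntiOn (fun r => (1 - r₀ ^ 2) / (2 * r) - r₀ * cos Θ) (Set.Ioi 0) :=
    fun x (hx : 0 < x) y _ hxy => sub_lt_sub_right
      (div_lt_div_of_pos_left (by nlinarith) (by positivity) (by linarith)) _
  refine ⟨fun r hr c hc => ?_, ContinuousOn.congr (by fun_prop (disch := grind)) hg.symm,
    hanti.congr hg⟩
  have hc₀ : c ≠ 0 := norm_pos_iff.1 (hc ▸ centerDist_pos hr₀ hr hκ₀)
  rw [← hc]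
  exact ⟨(closedBall_subset_ball_zero_iff hc₀ hr.le).trans lt_sub_iff_add_lt.symm,
    exists_sphere_inter_unitSphere_eq_singleton_iff hc₀ hr.le (hc ▸ hd_lo r hr) (hc ▸ hd_hi r hr),
    exists_ne_sphere_inter_unitSphere_eq_pair_iff hc₀ hr.le (hc ▸ hd_lo r hr)⟩
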